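/- Let ε > 0, p > 0, let Ω ⊂ ℝ² be a bounded measurable set, let w : ℝ² → ℝ be a nonnegative bounded measurable even function, and let u, v : Ω → ℝ be bounded measurable functions. Define g : ℝ → ℝ by g(s) = J_{ε,p}(u + s·v) = (1/4)∫_Ω ∫_Ω w(x−y) φ_{ε,p}((u+s·v)(y) − (u+s·v)(x)) dx dy. Then g is differentiable at s = 0 with g′(0) = −∫_Ω K_{ε,p}(u)(x) v(x) dx. -/

import Mathlib

open Real MeasureTheory

/-- The differential kernel `k_{ε,p}(s) = s (s² + ε²)^((p−2)/2)`. -/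
noncomputable def kKer (ε p s : ℝ) : ℝ := s * (s ^ 2 + ε ^ 2) ^ ((p - 2) / 2)

/-- `v` is bounded and measurable (bounded on `Ω`). -/
def BddMeas (Ω : Set (ℝ × ℝ)) (v : ℝ × ℝ → ℝ) : Prop :=
  Measurable v ∧ ∃ M, ∀ x ∈ Ω, |v x| ≤ M

/-- The nonlocal diffusion operator `K_{ε,p}(v)(x) = ∫_Ω w(x−y) k_{ε,p}(v(y)−v(x)) dy`. -/
noncomputable def Knl (ε p : ℝ) (w : ℝ × ℝ → ℝ) (Ω : Set (ℝ × ℝ)) (v : ℝ × ℝ → ℝ)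
    (x : ℝ × ℝ) : ℝ :=
  ∫ y in Ω, w (x - y) * kKer ε p (v y - v x)

/-- The regularized potential `φ_{ε,p}(s) = (2/p)(s² + ε²)^(p/2) − (2/p)ε^p`. -/
noncomputable def phiReg (ε p s : ℝ) : ℝ := (2 / p) * (s ^ 2 + ε ^ 2) ^ (p / 2) - (2 / p) * ε ^ p

/-- The regularized nonlocal energy `J_{ε,p}(v) = (1/4)∫_Ω∫_Ω w(x−y) φ_{ε,p}(v(y)−v(x))`. -/
noncomputable def Jnl (ε p : ℝ) (w : ℝ × ℝ → ℝ) (Ω : Set (ℝ × ℝ)) (v : ℝ × ℝ → ℝ) : ℝ :=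
  (1/4) * ∫ x in Ω, ∫ y in Ω, w (x - y) * phiReg ε p (v y - v x)

/-! Written over the finite measure space `Ω × Ω`, the energy along the line `u + s v` is
`s ↦ ¼ ∫ w(x−y) φ(a + s b)` with `a = u(y) − u(x)`, `b = v(y) − v(x)` bounded. Since `φ' = 2k` is
continuous, the `s`-derivatives are dominated by a constant and may be taken under the integral,
giving `½ ∫∫ w(x−y) k(u(y)−u(x)) (v(y)−v(x))`. As `w` is even and `k` odd, the factor in front
of `v(y) − v(x)` changes sign under `x ↔ y`, so the `v(y)` term equals minus the `v(x)` term, and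
Fubini turns `∫∫ w(x−y) k(u(y)−u(x)) v(x)` into `∫ K(u) v`. -/

open scoped ENNReal

namespace MeasureTheory

variable {X Y E F : Type*} [MeasurableSpace X] [MeasurableSpace Y]
  [NormedAddCommGroup E] [NormedAddCommGroup F] {μ : Measure X} {ν : Measure Y}

theorem MemLp.exists_ae_norm_le {f : X → E} (hf : MemLp f ∞ μ) : ∃ C, ∀ᵐ x ∂μ, ‖f x‖ ≤ C := by
  obtain ⟨C, hC⟩ := eLpNormEssSup_lt_top_iff_isBoundedUnder.mp hf.eLpNorm_lt_top
  exact ⟨C, Filter.eventually_map.mp hC |>.mono fun x hx => by exact_mod_cast hx⟩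

theorem MemLp.comp_quasiMeasurePreserving_top {f : Y → E} {g : X → Y} (hf : MemLp f ∞ ν)
    (hg : Measure.QuasiMeasurePreserving g μ ν) : MemLp (f ∘ g) ∞ μ := by
  obtain ⟨C, hC⟩ := hf.exists_ae_norm_le
  exact memLp_top_of_bound (hf.1.comp_quasiMeasurePreserving hg) C (hg.ae hC)

theorem _root_.Continuous.comp_memLp_top [ProperSpace E] {f : E → F} (hf : Continuous f)
    {a : X → E} (ha : MemLp a ∞ μ) : MemLp (fun x => f (a x)) ∞ μ := by
  obtain ⟨A, hA⟩ := ha.exists_ae_norm_le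
  obtain ⟨K, hK⟩ := (isCompact_closedBall (0 : E) A).exists_bound_of_continuousOn hf.continuousOn
  refine memLp_top_of_bound (hf.comp_aestronglyMeasurable ha.1) K ?_
  filter_upwards [hA] with x hx
  exact hK _ (mem_closedBall_zero_iff.mpr hx)

theorem memLp_top_comp_sub [AddGroup Y] [MeasurableSub₂ Y] {w : Y → ℝ} (hwm : Measurable w)
    (hwbd : ∃ M, ∀ z, |w z| ≤ M) (μ : Measure (Y × Y)) :
    MemLp (fun z => w (z.1 - z.2)) ∞ μ := by
  obtain ⟨M, hM⟩ := hwbd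
  exact memLp_top_of_bound (hwm.comp (measurable_fst.sub measurable_snd)).aestronglyMeasurable M
    (ae_of_all _ fun z => hM _)

theorem hasDerivAt_integral_mul_comp_add_mul [IsFiniteMeasure μ] {c a b : X → ℝ} {f f' : ℝ → ℝ}
    (hf : ∀ t, HasDerivAt f (f' t) t) (hf' : Continuous f')
    (hc : MemLp c ∞ μ) (ha : MemLp a ∞ μ) (hb : MemLp b ∞ μ) :
    HasDerivAt (fun s => ∫ x, c x * f (a x + s * b x) ∂μ) (∫ x, c x * (f' (a x) * b x) ∂μ) 0 := by
  have hf_cont : Continuous f := continuous_iff_continuousAt.2 fun t => (hf t).continuousAt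
  have hF : ∀ s, MemLp (fun x => c x * f (a x + s * b x)) ∞ μ := fun s =>
    (hf_cont.comp_memLp_top (ha.add (hb.const_mul s))).mul' hc
  obtain ⟨A, hA⟩ := ha.exists_ae_norm_le
  obtain ⟨B, hB⟩ := hb.exists_ae_norm_le
  obtain ⟨C, hC⟩ := hc.exists_ae_norm_le
  obtain ⟨K, hK⟩ :=
    (isCompact_closedBall (0 : ℝ) (A + B)).exists_bound_of_continuousOn hf'.continuousOn
  have h_bound : ∀ᵐ x ∂μ, ∀ s ∈ Metric.ball (0 : ℝ) 1,
      ‖c x * (f' (a x + s * b x) * b x)‖ ≤ C * (K * B) := by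
    filter_upwards [hA, hB, hC] with x hAx hBx hCx s hs
    have hs1 : ‖s‖ ≤ 1 := (mem_ball_zero_iff.mp hs).le
    have hmem : a x + s * b x ∈ Metric.closedBall (0 : ℝ) (A + B) := by
      rw [mem_closedBall_zero_iff]
      calc ‖a x + s * b x‖ ≤ ‖a x‖ + ‖s‖ * ‖b x‖ := (norm_add_le _ _).trans_eq (by rw [norm_mul])
        _ ≤ A + B := add_le_add hAx (mul_le_of_le_one_left (norm_nonneg _) hs1 |>.trans hBx)
    have hKx := hK _ hmem
    rw [norm_mul, norm_mul]
    exact mul_le_mul hCx (mul_le_mul hKx hBx (norm_nonneg _) ((norm_nonneg _).trans hKx))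
      (by positivity) ((norm_nonneg _).trans hCx)
  have h_diff : ∀ x, ∀ s : ℝ, HasDerivAt (fun s => c x * f (a x + s * b x))
      (c x * (f' (a x + s * b x) * b x)) s := fun x s =>
    ((hf _).comp s (((hasDerivAt_id s).mul_const (b x)).const_add (a x))).const_mul (c x)
      |>.congr_deriv (by simp)
  have := hasDerivAt_integral_of_dominated_loc_of_deriv_le (Metric.ball_mem_nhds 0 one_pos)
    (.of_forall fun s => (hF s).1) ((hF 0).integrable le_top)
    (hc.1.mul ((hf'.comp_aestronglyMeasurable (ha.add (hb.const_mul 0)).1).mul hb.1)) h_bound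
    (integrable_const _) (ae_of_all _ fun x s _ => h_diff x s)
  simpa using this.2

theorem integral_prod_mul_sub_of_swap_eq_neg {ν : Measure X} [SFinite ν] {G : X × X → ℝ}
    (hG : ∀ z, G z.swap = -G z) {v : X → ℝ} (h₁ : Integrable (fun z => G z * v z.1) (ν.prod ν))
    (h₂ : Integrable (fun z => G z * v z.2) (ν.prod ν)) :
    ∫ z, G z * (v z.2 - v z.1) ∂ν.prod ν = -2 * ∫ z, G z * v z.1 ∂ν.prod ν := by
  have hswap : ∫ z, G z * v z.2 ∂ν.prod ν = -∫ z, G z * v z.1 ∂ν.prod ν := by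
    rw [← integral_prod_swap, ← integral_neg]
    simp only [hG, Prod.snd_swap, neg_mul]
  simp_rw [mul_sub]
  rw [integral_sub h₂ h₁, hswap]
  ring

end MeasureTheory

theorem continuous_kKer {ε : ℝ} (hε : 0 < ε) (p : ℝ) : Continuous (kKer ε p) :=
  continuous_id.mul ((continuous_pow 2 |>.add continuous_const).rpow_const
    fun s => Or.inl (by show s ^ 2 + ε ^ 2 ≠ 0; positivity))

theorem continuous_phiReg {ε : ℝ} (hε : 0 < ε) (p : ℝ) : Continuous (phiReg ε p) :=
  (continuous_const.mul ((continuous_pow 2 |>.add continuous_const).rpow_const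
    fun s => Or.inl (by show s ^ 2 + ε ^ 2 ≠ 0; positivity))).sub continuous_const

theorem kKer_neg (ε p s : ℝ) : kKer ε p (-s) = -kKer ε p s := by
  simp only [kKer, neg_sq, neg_mul]

theorem hasDerivAt_phiReg {ε p : ℝ} (hε : 0 < ε) (hp : 0 < p) (s : ℝ) :
    HasDerivAt (phiReg ε p) (2 * kKer ε p s) s := by
  have hbase : HasDerivAt (fun t : ℝ => t ^ 2 + ε ^ 2) (2 * s) s := by
    simpa using (hasDerivAt_pow 2 s).add_const (ε ^ 2)
  have hpow := (hbase.rpow_const (p := p / 2) (Or.inl (by positivity))).const_mul (2 / p)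
  refine (hpow.sub_const ((2 / p) * ε ^ p)).congr_deriv ?_
  rw [kKer, show p / 2 - 1 = (p - 2) / 2 by ring]
  field_simp

section Nonlocal

variable {Ω : Set (ℝ × ℝ)} {u v : ℝ × ℝ → ℝ}

theorem BddMeas.add_const_mul (hu : BddMeas Ω u) (hv : BddMeas Ω v) (s : ℝ) :
    BddMeas Ω (fun x => u x + s * v x) := by
  obtain ⟨hum, Mu, hMu⟩ := hu
  obtain ⟨hvm, Mv, hMv⟩ := hv
  refine ⟨hum.add (measurable_const.mul hvm), Mu + |s| * Mv, fun x hx => ?_⟩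
  calc |u x + s * v x| ≤ |u x| + |s| * |v x| := (abs_add_le _ _).trans_eq (by rw [abs_mul])
    _ ≤ Mu + |s| * Mv := add_le_add (hMu x hx) (by gcongr; exact hMv x hx)

theorem BddMeas.memLp_top (hu : BddMeas Ω u) : MemLp u ∞ (volume.restrict Ω) := by
  obtain ⟨hum, M, hM⟩ := hu
  have hmeas : MeasurableSet {x | |u x| ≤ M} := measurableSet_le hum.abs measurable_const
  exact memLp_top_of_bound hum.aestronglyMeasurable M
    (ae_restrict_of_ae_restrict_of_subset hM (ae_restrict_mem hmeas))

theorem BddMeas.memLp_top_fst (hu : BddMeas Ω u) :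
    MemLp (fun z : (ℝ × ℝ) × (ℝ × ℝ) => u z.1) ∞
      ((volume.restrict Ω).prod (volume.restrict Ω)) :=
  hu.memLp_top.comp_quasiMeasurePreserving_top Measure.quasiMeasurePreserving_fst

theorem BddMeas.memLp_top_snd (hu : BddMeas Ω u) :
    MemLp (fun z : (ℝ × ℝ) × (ℝ × ℝ) => u z.2) ∞
      ((volume.restrict Ω).prod (volume.restrict Ω)) :=
  hu.memLp_top.comp_quasiMeasurePreserving_top Measure.quasiMeasurePreserving_snd

theorem BddMeas.memLp_top_sub (hu : BddMeas Ω u) :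
    MemLp (fun z : (ℝ × ℝ) × (ℝ × ℝ) => u z.2 - u z.1) ∞
      ((volume.restrict Ω).prod (volume.restrict Ω)) :=
  hu.memLp_top_snd.sub hu.memLp_top_fst

variable [IsFiniteMeasure (volume.restrict Ω)] {w : ℝ × ℝ → ℝ} {ε : ℝ}

theorem Jnl_eq_integral_prod (hε : 0 < ε) (p : ℝ)
    (hw : MemLp (fun z => w (z.1 - z.2)) ∞ ((volume.restrict Ω).prod (volume.restrict Ω)))
    (hu : BddMeas Ω u) :
    Jnl ε p w Ω u = 1 / 4 * ∫ z, w (z.1 - z.2) * phiReg ε p (u z.2 - u z.1)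
      ∂(volume.restrict Ω).prod (volume.restrict Ω) := by
  rw [Jnl, integral_integral
    (((continuous_phiReg hε p).comp_memLp_top hu.memLp_top_sub).mul' hw |>.integrable le_top)]

theorem integral_Knl_mul (hε : 0 < ε) (p : ℝ)
    (hw : MemLp (fun z => w (z.1 - z.2)) ∞ ((volume.restrict Ω).prod (volume.restrict Ω)))
    (hu : BddMeas Ω u) (hv : BddMeas Ω v) :
    ∫ x in Ω, Knl ε p w Ω u x * v x = ∫ z, w (z.1 - z.2) * kKer ε p (u z.2 - u z.1) * v z.1
      ∂(volume.restrict Ω).prod (volume.restrict Ω) := by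
  simp_rw [Knl, ← integral_mul_const]
  have hwk := ((continuous_kKer hε p).comp_memLp_top hu.memLp_top_sub).mul' (r := ∞) hw
  exact integral_integral (hv.memLp_top_fst.mul' hwk |>.integrable le_top)

theorem integral_weight_mul_kKer_mul_sub (hε : 0 < ε) (p : ℝ) (hwe : ∀ z, w (-z) = w z)
    (hw : MemLp (fun z => w (z.1 - z.2)) ∞ ((volume.restrict Ω).prod (volume.restrict Ω)))
    (hu : BddMeas Ω u) (hv : BddMeas Ω v) :
    ∫ z, w (z.1 - z.2) * (2 * kKer ε p (u z.2 - u z.1) * (v z.2 - v z.1))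
      ∂(volume.restrict Ω).prod (volume.restrict Ω) = -4 * ∫ x in Ω, Knl ε p w Ω u x * v x := by
  set G := fun z : (ℝ × ℝ) × (ℝ × ℝ) => w (z.1 - z.2) * kKer ε p (u z.2 - u z.1)
  have hG_swap : ∀ z, G z.swap = -G z := fun z => by
    simp only [G, Prod.fst_swap, Prod.snd_swap]
    rw [← neg_sub z.1, hwe, ← neg_sub (u z.2), kKer_neg, mul_neg]
  have hG : MemLp G ∞ ((volume.restrict Ω).prod (volume.restrict Ω)) :=
    ((continuous_kKer hε p).comp_memLp_top hu.memLp_top_sub).mul' hw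
  have hsub := integral_prod_mul_sub_of_swap_eq_neg hG_swap
    (hv.memLp_top_fst.mul' hG |>.integrable le_top) (hv.memLp_top_snd.mul' hG |>.integrable le_top)
  calc ∫ z, w (z.1 - z.2) * (2 * kKer ε p (u z.2 - u z.1) * (v z.2 - v z.1))
        ∂(volume.restrict Ω).prod (volume.restrict Ω)
      = 2 * ∫ z, G z * (v z.2 - v z.1) ∂(volume.restrict Ω).prod (volume.restrict Ω) := by
        rw [← integral_const_mul]
        congr with z
        ring
    _ = -4 * ∫ x in Ω, Knl ε p w Ω u x * v x := by
        rw [hsub, integral_Knl_mul hε p hw hu hv]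
        ring

end Nonlocal

theorem gateaux_derivative_Jnl_general (ε p : ℝ) (hε : 0 < ε) (hp : 0 < p)
    (Ω : Set (ℝ × ℝ)) (hΩb : Bornology.IsBounded Ω)
    (w : ℝ × ℝ → ℝ) (hwm : Measurable w)
    (hwbd : ∃ M, ∀ z, |w z| ≤ M) (hwe : ∀ z, w (-z) = w z)
    (u v : ℝ × ℝ → ℝ) (hu : BddMeas Ω u) (hv : BddMeas Ω v) :
    HasDerivAt (fun s : ℝ => Jnl ε p w Ω (fun x => u x + s * v x))
      (-∫ x in Ω, Knl ε p w Ω u x * v x) 0 := by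
  have : IsFiniteMeasure (volume.restrict Ω) :=
    isFiniteMeasure_restrict.mpr hΩb.measure_lt_top.ne
  have hw := memLp_top_comp_sub hwm hwbd ((volume.restrict Ω).prod (volume.restrict Ω))
  have hJ : (fun s : ℝ => Jnl ε p w Ω (fun x => u x + s * v x)) = fun s => 1 / 4 *
      ∫ z, w (z.1 - z.2) * phiReg ε p ((u z.2 - u z.1) + s * (v z.2 - v z.1))
        ∂(volume.restrict Ω).prod (volume.restrict Ω) := by
    funext s
    rw [Jnl_eq_integral_prod hε p hw (hu.add_const_mul hv s)]
    congr with z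
    congr 2
    ring
  rw [hJ]
  refine ((hasDerivAt_integral_mul_comp_add_mul (hasDerivAt_phiReg hε hp)
    ((continuous_kKer hε p).const_mul 2) hw hu.memLp_top_sub hv.memLp_top_sub).const_mul
      (1 / 4)).congr_deriv ?_
  rw [integral_weight_mul_kKer_mul_sub hε p hwe hw hu hv]
  ring

theorem gateaux_derivative_Jnl (ε p : ℝ) (hε : 0 < ε) (hp : 0 < p)
    (Ω : Set (ℝ × ℝ)) (hΩm : MeasurableSet Ω) (hΩb : Bornology.IsBounded Ω)
    (w : ℝ × ℝ → ℝ) (hwm : Measurable w) (hwnn : ∀ z, 0 ≤ w z)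
    (hwbd : ∃ M, ∀ z, |w z| ≤ M) (hwe : ∀ z, w (-z) = w z)
    (u v : ℝ × ℝ → ℝ) (hu : BddMeas Ω u) (hv : BddMeas Ω v) :
    HasDerivAt (fun s : ℝ => Jnl ε p w Ω (fun x => u x + s * v x))
      (-∫ x in Ω, Knl ε p w Ω u x * v x) 0 :=
  gateaux_derivative_Jnl_general ε p hε hp Ω hΩb w hwm hwbd hwe u v hu hv
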